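/- arXiv:1311.1450 — 6 statements merged into one kernel-verified Lean document; each statement's English description precedes it below -/
import Mathlib

section
/- For all x in [0,1], exp(-x) ≤ sqrt(1+x^2) - x. -/
theorem exp_le_sqrt_one_add_sq_sub (x : ℝ) (hx : x ∈ Set.Icc (0:ℝ) 1) :
    Real.exp (-x) ≤ Real.sqrt (1 + x ^ 2) - x := by
  obtain ⟨hx0, hx1⟩ := hx
  set s := Real.sqrt (1 + x ^ 2) with hs
  have hs2 : s ^ 2 = 1 + x ^ 2 := Real.sq_sqrt (by positivity)
  have hs0 : 0 ≤ s := Real.sqrt_nonneg _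
  have hsx : x ≤ s := by nlinarith
  have hsup : s ≤ 1 + x ^ 2 / 2 := by nlinarith
  have hexp : 1 + x + x ^ 2 / 2 ≤ Real.exp x := by
    have h := Real.sum_le_exp_of_nonneg hx0 3
    simp [Finset.sum_range_succ, Nat.factorial] at h
    nlinarith [h]
  have hmain : s + x ≤ Real.exp x := by linarith
  have h1 : Real.exp (-x) * Real.exp x = 1 := by
    rw [← Real.exp_add]; simp
  nlinarith [Real.exp_pos x, Real.exp_pos (-x), h1, hmain, hs2, hsx]
end

section
/- For all x in [0,1], sqrt(1+x^2) - x ≤ exp(-α₀ x), where α₀ = -log(√2 - 1). -/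
open Real

lemma arsinh_concave : ConcaveOn ℝ (Set.Icc (0:ℝ) 1) Real.arsinh := by
  apply AntitoneOn.concaveOn_of_deriv (convex_Icc 0 1)
    Real.continuous_arsinh.continuousOn
    (fun x _ => Real.differentiable_arsinh.differentiableAt.differentiableWithinAt)
  intro a ha b hb hab
  rw [interior_Icc] at ha hb
  rw [(Real.hasDerivAt_arsinh a).deriv, (Real.hasDerivAt_arsinh b).deriv]
  have h1 : (0:ℝ) < Real.sqrt (1 + a ^ 2) := Real.sqrt_pos.2 (by positivity)
  apply inv_anti₀ h1
  apply Real.sqrt_le_sqrt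
  nlinarith [ha.1]

lemma arsinh_ge (x : ℝ) (hx : x ∈ Set.Icc (0:ℝ) 1) :
    x * Real.arsinh 1 ≤ Real.arsinh x := by
  obtain ⟨h0, h1⟩ := hx
  have := arsinh_concave.2 (Set.left_mem_Icc.2 one_pos.le) (Set.right_mem_Icc.2 one_pos.le)
    (show (0:ℝ) ≤ 1 - x by linarith) h0 (by ring)
  simpa [Real.arsinh_zero] using this

theorem sqrt_one_add_sq_sub_le_exp (x : ℝ) (hx : x ∈ Set.Icc (0:ℝ) 1) :
    Real.sqrt (1 + x ^ 2) - x ≤ Real.exp (-((-Real.log (Real.sqrt 2 - 1)) * x)) := by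
  have hs : Real.sqrt (1 + x ^ 2) ^ 2 = 1 + x ^ 2 := Real.sq_sqrt (by positivity)
  have h2 : Real.sqrt 2 ^ 2 = 2 := Real.sq_sqrt (by norm_num)
  have h2pos : (1:ℝ) < Real.sqrt 2 := by nlinarith [Real.sqrt_nonneg 2]
  have hlog : -Real.log (Real.sqrt 2 - 1) = Real.arsinh 1 := by
    have hinv : (Real.sqrt 2 - 1)⁻¹ = 1 + Real.sqrt 2 :=
      inv_eq_of_mul_eq_one_right (by nlinarith)
    rw [← Real.log_inv, hinv, Real.arsinh]
    norm_num
  have hL : Real.sqrt (1 + x ^ 2) - x = Real.exp (-Real.arsinh x) := by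
    rw [Real.exp_neg, Real.exp_arsinh, eq_comm]
    exact inv_eq_of_mul_eq_one_left (by nlinarith [Real.sqrt_nonneg (1 + x^2)])
  rw [hL, hlog, Real.exp_le_exp, neg_le_neg_iff, mul_comm]
  exact arsinh_ge x hx
end

section
/- The constant α₀ = -log(√2 - 1) is optimal for the upper bound: for any α > α₀, there exists x in [0,1] with sqrt(1+x^2) - x > exp(-α x). -/
theorem alpha0_optimal_upper (α : ℝ) (hα : -Real.log (Real.sqrt 2 - 1) < α) :
    ∃ x ∈ Set.Icc (0:ℝ) 1, Real.exp (-(α * x)) < Real.sqrt (1 + x ^ 2) - x := by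
  refine ⟨1, by norm_num, ?_⟩
  have h2 : (0:ℝ) < Real.sqrt 2 - 1 := by
    have : (1:ℝ) < Real.sqrt 2 := by
      have := Real.sqrt_lt_sqrt (by norm_num) (by norm_num : (1:ℝ) < 2)
      simpa using this
    linarith
  have h : Real.exp (-(α * 1)) < Real.sqrt 2 - 1 := by
    have h := Real.exp_lt_exp.2 (by linarith : -(α * 1) < Real.log (Real.sqrt 2 - 1))
    rwa [Real.exp_log h2] at h
  norm_num at h ⊢
  exact h
end

section
/- For x ≥ 0, exp(-x²)/(x + sqrt(x² + 2)) ≤ ∫_x^∞ exp(-t²) dt ≤ exp(-x²)/(x + sqrt(x² + 4/π)). -/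
/-!
Put `G_a(x) = exp (-x²) / (x + √(x² + a))` and `D_a(x) = G_a(x) - ∫_x^∞ exp (-t²) dt`; both terms
tend to `0` at infinity, and `D_a'` has the sign of `(a - 1) √(x² + a) - x`. For `a ≥ 2` this is
positive, so `D_a` increases to `0` and is nonpositive. For `0 < a < 2` it changes sign once, from
`+` to `-`, at `x = (a - 1) / √(2 - a)`, so on `[0, ∞)` the function `D_a` stays above
`min (D_a 0) 0`; and `D_a 0 = 1 / √a - √π / 2` is nonnegative exactly when `a ≤ 4 / π`.
-/

open Real MeasureTheory Set Filter Topology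

section TailIntegral

variable {E : Type*} [NormedAddCommGroup E] [NormedSpace ℝ E] {f : ℝ → E}

theorem hasDerivAt_integral_Ioi [CompleteSpace E] (hf : Integrable f) {x : ℝ}
    (hfx : ContinuousAt f x) :
    HasDerivAt (fun y => ∫ t in Ioi y, f t) (-f x) x := by
  have h : (fun y => ∫ t in Ioi y, f t) = fun y => (∫ t in Ioi x, f t) - ∫ t in x..y, f t := by
    funext y
    rw [← intervalIntegral.integral_Ioi_sub_Ioi' hf.integrableOn hf.integrableOn, sub_sub_cancel]
  rw [h]
  exact (intervalIntegral.integral_hasDerivAt_right hf.intervalIntegrable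
    hf.aestronglyMeasurable.stronglyMeasurableAtFilter hfx).const_sub _

theorem tendsto_integral_Ioi_atTop {a : ℝ} (hf : IntegrableOn f (Ioi a)) :
    Tendsto (fun y => ∫ t in Ioi y, f t) atTop (𝓝 0) := by
  have h := tendsto_setIntegral_of_antitone (μ := volume) (f := f) (fun y => measurableSet_Ioi)
    (fun _ _ hyz => Ioi_subset_Ioi hyz) ⟨a, hf⟩
  have hempty : ⋂ y : ℝ, Ioi y = ∅ :=
    eq_empty_of_forall_notMem fun y hy => lt_irrefl y (mem_iInter.1 hy y)
  simpa [hempty] using h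

end TailIntegral

noncomputable def gaussianTailApprox (a x : ℝ) : ℝ := exp (-x ^ 2) / (x + √(x ^ 2 + a))

section Approx

variable {a : ℝ}

theorem abs_lt_sqrt_sq_add (ha : 0 < a) (x : ℝ) : |x| < √(x ^ 2 + a) :=
  lt_sqrt_of_sq_lt (by rw [sq_abs]; linarith)

theorem add_sqrt_sq_add_pos (ha : 0 < a) (x : ℝ) : 0 < x + √(x ^ 2 + a) := by
  linarith [neg_abs_le x, abs_lt_sqrt_sq_add ha x]

theorem tendsto_gaussianTailApprox_atTop (a : ℝ) :
    Tendsto (gaussianTailApprox a) atTop (𝓝 0) := by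
  have hexp : Tendsto (fun x : ℝ => exp (-x ^ 2)) atTop (𝓝 0) :=
    tendsto_exp_neg_atTop_nhds_zero.comp (tendsto_pow_atTop two_ne_zero)
  have hden : Tendsto (fun x : ℝ => x + √(x ^ 2 + a)) atTop atTop :=
    tendsto_atTop_mono (fun x => le_add_of_nonneg_right (sqrt_nonneg _)) tendsto_id
  exact hexp.div_atTop hden

theorem hasDerivAt_gaussianTailApprox (ha : 0 < a) (x : ℝ) :
    HasDerivAt (gaussianTailApprox a)
      (exp (-x ^ 2) * (((a - 1) * √(x ^ 2 + a) - x) / (√(x ^ 2 + a) * (x + √(x ^ 2 + a)) ^ 2) - 1))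
      x := by
  set s := √(x ^ 2 + a) with hs_def
  have hs : 0 < s := (abs_nonneg x).trans_lt (abs_lt_sqrt_sq_add ha x)
  have hs2 : s ^ 2 = x ^ 2 + a := sq_sqrt (by positivity)
  have hxs : 0 < x + s := add_sqrt_sq_add_pos ha x
  have hnum : HasDerivAt (fun y => exp (-y ^ 2)) (exp (-x ^ 2) * (-(2 * x))) x := by
    simpa using ((hasDerivAt_pow 2 x).neg).exp
  have hsqrt : HasDerivAt (fun y => √(y ^ 2 + a)) (x / s) x := by
    convert ((hasDerivAt_pow 2 x).add_const a).sqrt (by positivity) using 1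
    field_simp
    ring
  refine (hnum.div ((hasDerivAt_id' x).add hsqrt) hxs.ne').congr_deriv ?_
  simp only [Pi.add_apply, ← hs_def]
  field_simp
  linear_combination s * hs2

theorem integrable_exp_neg_sq : Integrable fun x : ℝ => exp (-x ^ 2) := by
  simpa using integrable_exp_neg_mul_sq one_pos

theorem hasDerivAt_gaussianTailApprox_sub_integral (ha : 0 < a) (x : ℝ) :
    HasDerivAt (fun y => gaussianTailApprox a y - ∫ t in Ioi y, exp (-t ^ 2))
      (exp (-x ^ 2) * ((a - 1) * √(x ^ 2 + a) - x) / (√(x ^ 2 + a) * (x + √(x ^ 2 + a)) ^ 2))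
      x :=
  ((hasDerivAt_gaussianTailApprox ha x).sub (hasDerivAt_integral_Ioi integrable_exp_neg_sq
    (by fun_prop))).congr_deriv (by ring)

theorem tendsto_gaussianTailApprox_sub_integral_atTop (a : ℝ) :
    Tendsto (fun y => gaussianTailApprox a y - ∫ t in Ioi y, exp (-t ^ 2)) atTop (𝓝 0) := by
  simpa using (tendsto_gaussianTailApprox_atTop a).sub
    (tendsto_integral_Ioi_atTop (a := 0) integrable_exp_neg_sq.integrableOn)

-- Both directions rest on
-- `((a - 1) * √(x ^ 2 + a)) ^ 2 - x ^ 2 = a * ((a - 1) ^ 2 - (2 - a) * x ^ 2)`.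
theorem le_sub_one_mul_sqrt_sq_add (ha : a < 2) {x : ℝ} (hx : 0 ≤ x)
    (hxc : x ≤ (a - 1) / √(2 - a)) : x ≤ (a - 1) * √(x ^ 2 + a) := by
  have hr : 0 < √(2 - a) := sqrt_pos.2 (by linarith)
  rw [le_div_iff₀ hr] at hxc
  have ha1 : 0 ≤ a - 1 := (mul_nonneg hx hr.le).trans hxc
  have hsq := pow_le_pow_left₀ (mul_nonneg hx hr.le) hxc 2
  rw [mul_pow, sq_sqrt (by linarith)] at hsq
  rw [← sq_le_sq₀ hx (mul_nonneg ha1 (sqrt_nonneg _)), mul_pow, sq_sqrt (by nlinarith)]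
  nlinarith [mul_le_mul_of_nonneg_left hsq (by linarith : (0 : ℝ) ≤ a)]

theorem sub_one_mul_sqrt_sq_add_le (ha : 0 < a) (ha' : a < 2) {x : ℝ} (hx : 0 ≤ x)
    (hcx : (a - 1) / √(2 - a) ≤ x) : (a - 1) * √(x ^ 2 + a) ≤ x := by
  have hr : 0 < √(2 - a) := sqrt_pos.2 (by linarith)
  rw [div_le_iff₀ hr] at hcx
  rcases le_total (a - 1) 0 with ha1 | ha1
  · nlinarith [sqrt_nonneg (x ^ 2 + a)]
  have hsq := pow_le_pow_left₀ ha1 hcx 2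
  rw [mul_pow, sq_sqrt (by linarith)] at hsq
  rw [← sq_le_sq₀ (mul_nonneg ha1 (sqrt_nonneg _)) hx, mul_pow, sq_sqrt (by positivity)]
  nlinarith [mul_le_mul_of_nonneg_left hsq ha.le]

end Approx

theorem nonneg_of_hasDerivAt_of_sign_change {f f' : ℝ → ℝ} {a c x : ℝ}
    (hf : ∀ y, HasDerivAt f (f' y) y) (hf'_nonneg : ∀ y ∈ Icc a c, 0 ≤ f' y)
    (hf'_nonpos : ∀ y, a ≤ y → c ≤ y → f' y ≤ 0) (ha : 0 ≤ f a)
    (hlim : Tendsto f atTop (𝓝 0)) (hx : a ≤ x) : 0 ≤ f x := by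
  have hcont : Continuous f := continuous_iff_continuousAt.2 fun y => (hf y).continuousAt
  rcases le_total x c with hxc | hcx
  · have hmono : MonotoneOn f (Icc a c) :=
      monotoneOn_of_hasDerivWithinAt_nonneg (convex_Icc a c) hcont.continuousOn
        (fun y _ => (hf y).hasDerivWithinAt) fun y hy => hf'_nonneg y (interior_subset hy)
    exact ha.trans (hmono (left_mem_Icc.2 (hx.trans hxc)) ⟨hx, hxc⟩ hx)
  · have hanti : AntitoneOn f (Ici x) :=
      antitoneOn_of_hasDerivWithinAt_nonpos (convex_Ici x) hcont.continuousOn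
        (fun y _ => (hf y).hasDerivWithinAt) fun y hy =>
          have hxy : x ≤ y := interior_subset hy
          hf'_nonpos y (hx.trans hxy) (hcx.trans hxy)
    exact le_of_tendsto hlim ((eventually_ge_atTop x).mono fun y hy => hanti self_mem_Ici hy hy)

theorem gaussianTailApprox_le_integral_Ioi {a : ℝ} (ha : 2 ≤ a) (x : ℝ) :
    gaussianTailApprox a x ≤ ∫ t in Ioi x, exp (-t ^ 2) := by
  have hmono : Monotone fun y => gaussianTailApprox a y - ∫ t in Ioi y, exp (-t ^ 2) := by
    refine monotone_of_hasDerivAt_nonneg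
      (hasDerivAt_gaussianTailApprox_sub_integral (by linarith)) fun y => ?_
    have hy : y < √(y ^ 2 + a) := (le_abs_self y).trans_lt (abs_lt_sqrt_sq_add (by linarith) y)
    have hnum : 0 ≤ (a - 1) * √(y ^ 2 + a) - y := by nlinarith [sqrt_nonneg (y ^ 2 + a)]
    exact div_nonneg (mul_nonneg (exp_pos _).le hnum) (by positivity)
  exact sub_nonpos.1 (hmono.ge_of_tendsto (tendsto_gaussianTailApprox_sub_integral_atTop a) x)

theorem integral_Ioi_le_gaussianTailApprox {a : ℝ} (ha : 0 < a) (ha' : a ≤ 4 / π) {x : ℝ}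
    (hx : 0 ≤ x) : ∫ t in Ioi x, exp (-t ^ 2) ≤ gaussianTailApprox a x := by
  have ha2 : a < 2 := ha'.trans_lt ((div_lt_iff₀ pi_pos).2 (by linarith [pi_gt_three]))
  have hzero : ∫ t in Ioi 0, exp (-t ^ 2) ≤ gaussianTailApprox a 0 := by
    have h := integral_gaussian_Ioi 1
    simp only [neg_one_mul, div_one] at h
    have hpia : √π * √a ≤ 2 := by
      rw [← sqrt_mul pi_pos.le, sqrt_le_iff]
      constructor
      · norm_num
      · rw [le_div_iff₀' pi_pos] at ha'
        linarith
    rw [h, gaussianTailApprox, div_le_div_iff₀ two_pos (by simpa using sqrt_pos.2 ha)]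
    simpa using hpia
  have hnonneg := nonneg_of_hasDerivAt_of_sign_change (c := (a - 1) / √(2 - a))
      (hasDerivAt_gaussianTailApprox_sub_integral ha)
      (fun y hy => ?_) (fun y hy hcy => ?_) (sub_nonneg.2 hzero)
      (tendsto_gaussianTailApprox_sub_integral_atTop a) hx
  · exact sub_nonneg.1 hnonneg
  · exact div_nonneg (mul_nonneg (exp_pos _).le
      (sub_nonneg.2 (le_sub_one_mul_sqrt_sq_add ha2 hy.1 hy.2))) (by positivity)
  · exact div_nonpos_of_nonpos_of_nonneg (mul_nonpos_of_nonneg_of_nonpos (exp_pos _).le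
      (sub_nonpos.2 (sub_one_mul_sqrt_sq_add_le ha ha2 hy hcy))) (by positivity)

theorem gaussian_tail_bounds (x : ℝ) (hx : 0 ≤ x) :
    Real.exp (-x ^ 2) / (x + Real.sqrt (x ^ 2 + 2)) ≤
        (∫ t in Set.Ioi x, Real.exp (-t ^ 2)) ∧
      (∫ t in Set.Ioi x, Real.exp (-t ^ 2)) ≤
        Real.exp (-x ^ 2) / (x + Real.sqrt (x ^ 2 + 4 / Real.pi)) :=
  ⟨gaussianTailApprox_le_integral_Ioi le_rfl x,
    integral_Ioi_le_gaussianTailApprox (by positivity) le_rfl hx⟩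
end

section
/- For a natural number ν with [x] ≤ ν (where [x] is the floor of x > 0), assuming the Amos upper bound I_{k+1}(x)/I_k(x) ≤ x/(k + 1/2 + sqrt((k+1/2)² + x²)) for all k, one has ∏_{k=[x]}^{ν-1} I_{k+1}(x)/I_k(x) ≤ B([x] + x + 1/2, ν - [x]) · x^{ν-[x]}/(ν - [x] - 1)!, where B is the Beta function, provided ν > [x]. -/
/-- Modified Bessel function of the first kind. -/
noncomputable def besselI (ν x : ℝ) : ℝ :=
  ∑' k : ℕ, (x / 2) ^ (2 * (k : ℝ) + ν) / ((Nat.factorial k : ℝ) * Real.Gamma ((k : ℝ) + ν + 1))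

/-- H(ν,x) = Σ_{k=1}^∞ I_{ν+k}(x)/I_ν(x). -/
noncomputable def besselH (ν x : ℝ) : ℝ :=
  ∑' k : ℕ, besselI (ν + (k : ℝ) + 1) x / besselI ν x

/-- Beta function B(a,b) = Γ(a)Γ(b)/Γ(a+b). -/
noncomputable def Beta (a b : ℝ) : ℝ := Real.Gamma a * Real.Gamma b / Real.Gamma (a + b)

lemma besselI_nonneg (ν x : ℝ) (hν : 0 ≤ ν) (hx : 0 < x) : 0 ≤ besselI ν x := by
  apply tsum_nonneg
  intro k
  apply div_nonneg
  · exact (Real.rpow_pos_of_pos (by linarith) _).le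
  · apply mul_nonneg (Nat.cast_nonneg _)
    exact (Real.Gamma_pos_of_pos (by have := Nat.cast_nonneg (α := ℝ) k; linarith)).le

lemma telescope (c : ℝ) (hc : 0 < c) (m : ℕ) : ∀ ν : ℕ, m ≤ ν →
    Real.Gamma ((m : ℝ) + c) * ∏ k ∈ Finset.Ico m ν, ((k : ℝ) + c) = Real.Gamma ((ν : ℝ) + c) := by
  intro ν
  induction ν with
  | zero => intro h; simp_all
  | succ n ih =>
    intro h
    rcases Nat.lt_or_ge m (n + 1) with h' | h'
    · have hmn : m ≤ n := Nat.lt_succ_iff.mp h'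
      rw [Finset.prod_Ico_succ_top hmn, ← mul_assoc, ih hmn]
      push_cast
      rw [show (n : ℝ) + 1 + c = ((n : ℝ) + c) + 1 by ring, Real.Gamma_add_one (by positivity)]
      ring
    · have : m = n + 1 := le_antisymm h h'
      subst this; simp

theorem bessel_prod_upper_beta (x : ℝ) (hx : 0 < x) (ν : ℕ) (hν : Nat.floor x < ν)
    (hAmos : ∀ k : ℕ, besselI ((k : ℝ) + 1) x / besselI (k : ℝ) x ≤
      x / ((k : ℝ) + 1 / 2 + Real.sqrt (((k : ℝ) + 1 / 2) ^ 2 + x ^ 2))) :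
    ∏ k ∈ Finset.Ico (Nat.floor x) ν, besselI ((k : ℝ) + 1) x / besselI (k : ℝ) x ≤
      Beta ((Nat.floor x : ℝ) + x + 1 / 2) ((ν : ℝ) - (Nat.floor x : ℝ)) *
        x ^ (ν - Nat.floor x) / (Nat.factorial (ν - Nat.floor x - 1) : ℝ) := by
  set m := Nat.floor x with hm
  set n := ν - m with hn
  have hmn : m ≤ ν := hν.le
  have hn1 : 1 ≤ n := Nat.le_sub_of_add_le (by omega)
  have hcast : ((ν : ℝ) - (m : ℝ)) = (n : ℝ) := by
    rw [hn]; push_cast [Nat.cast_sub hmn]; ring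
  set c : ℝ := x + 1 / 2 with hc
  have hc0 : 0 < c := by positivity
  -- step 1: bound the product
  have step1 : ∏ k ∈ Finset.Ico m ν, besselI ((k : ℝ) + 1) x / besselI (k : ℝ) x ≤
      ∏ k ∈ Finset.Ico m ν, x / ((k : ℝ) + c) := by
    apply Finset.prod_le_prod
    · intro k _
      exact div_nonneg (besselI_nonneg _ _ (by positivity) hx) (besselI_nonneg _ _ (Nat.cast_nonneg _) hx)
    · intro k _
      refine (hAmos k).trans ?_
      have hsq : x ≤ Real.sqrt (((k : ℝ) + 1 / 2) ^ 2 + x ^ 2) := by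
        have h2 := Real.sqrt_le_sqrt (show x ^ 2 ≤ ((k : ℝ) + 1 / 2) ^ 2 + x ^ 2 by
          nlinarith [sq_nonneg ((k : ℝ) + 1 / 2)])
        rwa [Real.sqrt_sq hx.le] at h2
      have : (k : ℝ) + c ≤ (k : ℝ) + 1 / 2 + Real.sqrt (((k : ℝ) + 1 / 2) ^ 2 + x ^ 2) := by
        rw [hc]; linarith
      exact div_le_div_of_nonneg_left hx.le (by have := Nat.cast_nonneg (α := ℝ) k; linarith) this
  refine step1.trans_eq ?_
  -- step 2: compute the product
  have hcard : (Finset.Ico m ν).card = n := by rw [Nat.card_Ico]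
  have htel := telescope c hc0 m ν hmn
  have hP : (0 : ℝ) < ∏ k ∈ Finset.Ico m ν, ((k : ℝ) + c) := by
    apply Finset.prod_pos; intro k _; have := Nat.cast_nonneg (α := ℝ) k; linarith
  have hprod : ∏ k ∈ Finset.Ico m ν, x / ((k : ℝ) + c) =
      x ^ n * Real.Gamma ((m : ℝ) + c) / Real.Gamma ((ν : ℝ) + c) := by
    rw [Finset.prod_div_distrib, Finset.prod_const, hcard, ← htel]
    field_simp
  rw [hprod, hcard] at *
  -- step 3: compute the RHS
  have hΓn : Real.Gamma ((n : ℝ)) = (Nat.factorial (n - 1) : ℝ) := by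
    have : (n : ℝ) = ((n - 1 : ℕ) : ℝ) + 1 := by push_cast [Nat.cast_sub hn1]; ring
    rw [this, Real.Gamma_nat_eq_factorial]
  have hsum : ((m : ℝ) + x + 1 / 2) + ((ν : ℝ) - (m : ℝ)) = (ν : ℝ) + c := by rw [hc]; ring
  have hΓν : (0 : ℝ) < Real.Gamma ((ν : ℝ) + c) := Real.Gamma_pos_of_pos (by have := Nat.cast_nonneg (α := ℝ) ν; linarith)
  have hfac : (0 : ℝ) < (Nat.factorial (n - 1) : ℝ) := by positivity
  rw [Beta, hsum, hcast, hΓn]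
  have hmc : (m : ℝ) + x + 1 / 2 = (m : ℝ) + c := by rw [hc]; ring
  rw [hmc]
  field_simp
end

section
/- For x ≥ 0 and a natural number ν with ν > [x], assuming the Amos lower bound I_{k+1}(x)/I_k(x) ≥ x/(k + 1 + sqrt((k+1)² + x²)) for all k, one has ∏_{k=[x]}^{ν-1} I_{k+1}(x)/I_k(x) ≥ B([x] + x/2 + 1, ν - [x]) · (x/2)^{ν-[x]}/(ν - [x] - 1)!. -/
lemma prod_telescope_gamma (x : ℝ) (hx : 0 ≤ x) (m ν : ℕ) (h : m ≤ ν) :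
    ∏ k ∈ Finset.Ico m ν, ((k : ℝ) + 1 + x / 2) =
      Real.Gamma ((ν : ℝ) + 1 + x / 2) / Real.Gamma ((m : ℝ) + 1 + x / 2) := by
  induction ν, h using Nat.le_induction with
  | base => rw [Finset.Ico_self, Finset.prod_empty,
      div_self (Real.Gamma_pos_of_pos (by positivity : (0:ℝ) < (m:ℝ)+1+x/2)).ne']
  | succ n hn ih =>
      have hpos : (0 : ℝ) < Real.Gamma ((m : ℝ) + 1 + x / 2) :=
        Real.Gamma_pos_of_pos (by positivity)
      rw [Finset.prod_Ico_succ_top hn, ih]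
      have : ((n : ℝ) + 1) + 1 + x / 2 = ((n : ℝ) + 1 + x / 2) + 1 := by ring
      push_cast
      rw [this, Real.Gamma_add_one (by positivity)]
      field_simp

theorem bessel_prod_lower_beta (x : ℝ) (hx : 0 ≤ x) (ν : ℕ) (hν : Nat.floor x < ν)
    (hνx : x < (ν : ℝ))
    (hAmos : ∀ k : ℕ, x / ((k : ℝ) + 1 + Real.sqrt (((k : ℝ) + 1) ^ 2 + x ^ 2)) ≤
      besselI ((k : ℝ) + 1) x / besselI (k : ℝ) x) :
    Beta ((Nat.floor x : ℝ) + x / 2 + 1) ((ν : ℝ) - (Nat.floor x : ℝ)) *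
        (x / 2) ^ (ν - Nat.floor x) / (Nat.factorial (ν - Nat.floor x - 1) : ℝ) ≤
      ∏ k ∈ Finset.Ico (Nat.floor x) ν, besselI ((k : ℝ) + 1) x / besselI (k : ℝ) x := by
  set m := Nat.floor x with hm
  set n := ν - m with hn
  have hmn : m + n = ν := Nat.add_sub_cancel' hν.le
  have hn1 : 1 ≤ n := Nat.le_sub_of_add_le (by omega)
  -- step 1: pointwise bound
  have step1 : ∀ k ∈ Finset.Ico m ν,
      (x / 2) / ((k : ℝ) + 1 + x / 2) ≤ besselI ((k : ℝ) + 1) x / besselI (k : ℝ) x := by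
    intro k _
    refine le_trans ?_ (hAmos k)
    have hs : Real.sqrt (((k : ℝ) + 1) ^ 2 + x ^ 2) ≤ (k : ℝ) + 1 + x := by
      rw [show ((k : ℝ) + 1 + x) = Real.sqrt (((k : ℝ) + 1 + x) ^ 2) from
        (Real.sqrt_sq (by positivity)).symm]
      exact Real.sqrt_le_sqrt (by nlinarith [mul_nonneg hx (by positivity : (0:ℝ) ≤ (k:ℝ)+1)])
    have hden1 : (0 : ℝ) < (k : ℝ) + 1 + Real.sqrt (((k : ℝ) + 1) ^ 2 + x ^ 2) := by
      have := Real.sqrt_nonneg (((k : ℝ) + 1) ^ 2 + x ^ 2)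
      positivity
    have hden2 : (k : ℝ) + 1 + Real.sqrt (((k : ℝ) + 1) ^ 2 + x ^ 2) ≤
        2 * ((k : ℝ) + 1 + x / 2) := by linarith
    calc (x / 2) / ((k : ℝ) + 1 + x / 2) = x / (2 * ((k : ℝ) + 1 + x / 2)) := div_div ..
      _ ≤ x / ((k : ℝ) + 1 + Real.sqrt (((k : ℝ) + 1) ^ 2 + x ^ 2)) :=
          div_le_div_of_nonneg_left hx hden1 hden2
  have step2 : ∏ k ∈ Finset.Ico m ν, (x / 2) / ((k : ℝ) + 1 + x / 2) ≤
      ∏ k ∈ Finset.Ico m ν, besselI ((k : ℝ) + 1) x / besselI (k : ℝ) x :=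
    Finset.prod_le_prod (fun k _ => by positivity) step1
  refine le_trans (le_of_eq ?_) step2
  -- compute the lower product
  have hcard : (Finset.Ico m ν).card = n := by rw [Nat.card_Ico]
  rw [Finset.prod_div_distrib, Finset.prod_const, hcard,
    prod_telescope_gamma x hx m ν hν.le]
  -- now equate with Beta expression
  have hGm : (0 : ℝ) < Real.Gamma ((m : ℝ) + 1 + x / 2) :=
    Real.Gamma_pos_of_pos (by positivity)
  have hGν : (0 : ℝ) < Real.Gamma ((ν : ℝ) + 1 + x / 2) :=
    Real.Gamma_pos_of_pos (by positivity)
  have hνm : ((ν : ℝ) - (m : ℝ)) = (n : ℝ) := by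
    rw [hn]; push_cast [Nat.cast_sub hν.le]; ring
  have hGn : Real.Gamma ((n : ℝ)) = (Nat.factorial (n - 1) : ℝ) := by
    rw [show (n : ℝ) = ((n - 1 : ℕ) : ℝ) + 1 by push_cast [Nat.cast_sub hn1]; ring,
      Real.Gamma_nat_eq_factorial]
  have hfac : (0 : ℝ) < (Nat.factorial (n - 1) : ℝ) := by positivity
  have hadd : ((m : ℝ) + x / 2 + 1) + (n : ℝ) = (ν : ℝ) + 1 + x / 2 := by
    rw [show (ν : ℝ) = (m : ℝ) + (n : ℝ) by exact_mod_cast hmn.symm]; ring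
  rw [Beta, hνm, hGn, hadd]
  rw [show (m : ℝ) + x / 2 + 1 = (m : ℝ) + 1 + x / 2 by ring]
  field_simp
end
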